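/- arXiv:1201.0416 — 5 statements merged into one kernel-verified Lean document; each statement's English description precedes it below -/
import Mathlib

section
/- Let S be a set and R ⊆ S × D(S) a relation from states to finitely supported probability distributions over S. Define the lifted relation R̄ ⊆ D(S) × D(S) as the smallest relation such that (i) if s R Θ then δ_s R̄ Θ (where δ_s is the point distribution at s), and (ii) if Δ_i R̄ Θ_i for i in a finite index set I and p_i ∈ [0,1] with Σ p_i = 1, then (Σ p_i·Δ_i) R̄ (Σ p_i·Θ_i). Then Δ R̄ Θ holds if and only if there exists a finite index set I, probabilities p_i summing to 1, states s_i, and distributions Θ_i such that Δ = Σ_{i∈I} p_i·δ_{s_i}, Θ = Σ_{i∈I} p_i·Θ_i, and s_i R Θ_i for each i ∈ I. -/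
open BigOperators

/-- Finitely supported real-valued functions; distributions live inside these. -/
abbrev PDist (S : Type) := S →₀ ℝ

/-- The point distribution assigning probability 1 to `s`. -/
noncomputable def point {S : Type} (s : S) : PDist S := Finsupp.single s 1

/-- `Δ` is a (finitely supported) probability distribution. -/
def IsDist {S : Type} (Δ : PDist S) : Prop :=
  (∀ s, 0 ≤ Δ s) ∧ (Δ.sum fun _ x => x) = 1

/-- The lifting of a relation from states to distributions, defined as the smallest
relation containing the point rule and closed under finite convex combinations. -/
inductive Lift {S : Type} (R : S → PDist S → Prop) : PDist S → PDist S → Prop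
  | pt {s : S} {Θ : PDist S} : R s Θ → Lift R (point s) Θ
  | lin (I : Finset ℕ) (p : ℕ → ℝ) (Δ Θ : ℕ → PDist S) :
      (∀ i ∈ I, 0 ≤ p i) → (∑ i ∈ I, p i) = 1 →
      (∀ i ∈ I, Lift R (Δ i) (Θ i)) →
      Lift R (∑ i ∈ I, p i • Δ i) (∑ i ∈ I, p i • Θ i)

/-- The lifting of a relation on states to a relation on distributions. -/
def liftRel {S : Type} (R : S → S → Prop) : PDist S → PDist S → Prop :=
  Lift (fun s Θ => ∃ t, R s t ∧ Θ = point t)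

/-! The decompositions `Δ = ∑ pᵢ δ_{sᵢ}`, `Θ = ∑ pᵢ Θᵢ` with `sᵢ R Θᵢ` include the point rule and
are closed under convex combinations: a convex combination of decompositions flattens into one
decomposition, indexed by the pairs `(i, j)` encoded by `Nat.pair`. Hence they contain the lift.
Conversely, a decomposition is a single convex-combination step applied to point-rule instances. -/

open Finset

namespace Nat

theorem pair_sigma_injective : Function.Injective fun x : (_ : ℕ) × ℕ => Nat.pair x.1 x.2 := by
  rintro ⟨a, b⟩ ⟨c, d⟩ h
  obtain ⟨rfl, rfl⟩ := Nat.pair_eq_pair.mp h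
  rfl

def pairSigma (I : Finset ℕ) (J : ℕ → Finset ℕ) : Finset ℕ :=
  (I.sigma J).image fun x => Nat.pair x.1 x.2

theorem sum_pairSigma {M : Type*} [AddCommMonoid M] (I : Finset ℕ) (J : ℕ → Finset ℕ)
    (f : ℕ → ℕ → M) :
    ∑ n ∈ pairSigma I J, f n.unpair.1 n.unpair.2 = ∑ i ∈ I, ∑ j ∈ J i, f i j := by
  rw [pairSigma, sum_image pair_sigma_injective.injOn, sum_sigma]
  simp only [Nat.unpair_pair]

theorem unpair_mem_of_mem_pairSigma {I : Finset ℕ} {J : ℕ → Finset ℕ} {n : ℕ}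
    (hn : n ∈ pairSigma I J) : n.unpair.1 ∈ I ∧ n.unpair.2 ∈ J n.unpair.1 := by
  simp only [pairSigma, mem_image, mem_sigma] at hn
  obtain ⟨⟨i, j⟩, ⟨hi, hj⟩, rfl⟩ := hn
  simpa only [Nat.unpair_pair] using ⟨hi, hj⟩

end Nat

section PointDecomposition

variable {S : Type} {R : S → PDist S → Prop}

def HasPointDecomposition (R : S → PDist S → Prop) (Δ Θ : PDist S) : Prop :=
  ∃ (I : Finset ℕ) (p : ℕ → ℝ) (s : ℕ → S) (Θi : ℕ → PDist S),
    (∀ i ∈ I, 0 ≤ p i) ∧ (∑ i ∈ I, p i) = 1 ∧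
    Δ = (∑ i ∈ I, p i • point (s i)) ∧
    Θ = (∑ i ∈ I, p i • Θi i) ∧
    (∀ i ∈ I, R (s i) (Θi i))

theorem HasPointDecomposition.of_rel {s : S} {Θ : PDist S} (h : R s Θ) :
    HasPointDecomposition R (point s) Θ :=
  ⟨{0}, fun _ => 1, fun _ => s, fun _ => Θ, by simp, by simp, by simp, by simp, by simp [h]⟩

theorem HasPointDecomposition.nonempty {Δ Θ : PDist S} (h : HasPointDecomposition R Δ Θ) :
    Nonempty S := by
  obtain ⟨I, _, s, -, -, hpsum, -⟩ := h
  obtain ⟨i, -⟩ := nonempty_of_sum_ne_zero (hpsum ▸ one_ne_zero)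
  exact ⟨s i⟩

theorem HasPointDecomposition.convexCombination {I : Finset ℕ} {p : ℕ → ℝ} {Δ Θ : ℕ → PDist S}
    (hp : ∀ i ∈ I, 0 ≤ p i) (hpsum : ∑ i ∈ I, p i = 1)
    (h : ∀ i ∈ I, HasPointDecomposition R (Δ i) (Θ i)) :
    HasPointDecomposition R (∑ i ∈ I, p i • Δ i) (∑ i ∈ I, p i • Θ i) := by
  obtain ⟨i₀, hi₀⟩ := nonempty_of_sum_ne_zero (hpsum ▸ one_ne_zero)
  -- `choose!` needs junk values of `S` for indices outside `I`
  have : Nonempty S := (h i₀ hi₀).nonempty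
  choose! J q s Θi hq hqsum hΔ hΘ hR using h
  refine ⟨Nat.pairSigma I J, fun n => p n.unpair.1 * q n.unpair.1 n.unpair.2,
    fun n => s n.unpair.1 n.unpair.2, fun n => Θi n.unpair.1 n.unpair.2, ?_, ?_, ?_, ?_, ?_⟩
  · intro n hn
    obtain ⟨hi, hj⟩ := Nat.unpair_mem_of_mem_pairSigma hn
    exact mul_nonneg (hp _ hi) (hq _ hi _ hj)
  · rw [Nat.sum_pairSigma I J fun i j => p i * q i j, ← hpsum]
    refine sum_congr rfl fun i hi => ?_
    rw [← mul_sum, hqsum i hi, mul_one]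
  · rw [Nat.sum_pairSigma I J fun i j => (p i * q i j) • point (s i j)]
    refine sum_congr rfl fun i hi => ?_
    simp only [hΔ i hi, smul_sum, smul_smul]
  · rw [Nat.sum_pairSigma I J fun i j => (p i * q i j) • Θi i j]
    refine sum_congr rfl fun i hi => ?_
    simp only [hΘ i hi, smul_sum, smul_smul]
  · intro n hn
    obtain ⟨hi, hj⟩ := Nat.unpair_mem_of_mem_pairSigma hn
    exact hR _ hi _ hj

theorem HasPointDecomposition.of_lift {Δ Θ : PDist S} (h : Lift R Δ Θ) :
    HasPointDecomposition R Δ Θ := by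
  induction h with
  | pt hs => exact .of_rel hs
  | lin I p Δ Θ hp hpsum _ ih => exact .convexCombination hp hpsum ih

theorem Lift.of_hasPointDecomposition {Δ Θ : PDist S} (h : HasPointDecomposition R Δ Θ) :
    Lift R Δ Θ := by
  obtain ⟨I, p, s, Θi, hp, hpsum, rfl, rfl, hR⟩ := h
  exact .lin I p (fun i => point (s i)) Θi hp hpsum fun i hi => .pt (hR i hi)

end PointDecomposition

theorem lift_characterisation_general {S : Type} (R : S → PDist S → Prop)
    (Δ Θ : PDist S) :
    Lift R Δ Θ ↔
      ∃ (I : Finset ℕ) (p : ℕ → ℝ) (s : ℕ → S) (Θi : ℕ → PDist S),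
        (∀ i ∈ I, 0 ≤ p i) ∧ (∑ i ∈ I, p i) = 1 ∧
        Δ = (∑ i ∈ I, p i • point (s i)) ∧
        Θ = (∑ i ∈ I, p i • Θi i) ∧
        (∀ i ∈ I, R (s i) (Θi i)) :=
  ⟨HasPointDecomposition.of_lift, Lift.of_hasPointDecomposition⟩

/-- Characterisation of the lifting: `Δ (Lift R) Θ` iff `Δ` decomposes as a finite convex
combination of point distributions `δ_{s_i}` with matching `Θ_i` such that `s_i R Θ_i`. -/
theorem lift_characterisation {S : Type} (R : S → PDist S → Prop)
    (hR : ∀ s Θ, R s Θ → IsDist Θ) (Δ Θ : PDist S) (hΔ : IsDist Δ) (hΘ : IsDist Θ) :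
    Lift R Δ Θ ↔
      ∃ (I : Finset ℕ) (p : ℕ → ℝ) (s : ℕ → S) (Θi : ℕ → PDist S),
        (∀ i ∈ I, 0 ≤ p i) ∧ (∑ i ∈ I, p i) = 1 ∧
        Δ = (∑ i ∈ I, p i • point (s i)) ∧
        Θ = (∑ i ∈ I, p i • Θi i) ∧
        (∀ i ∈ I, R (s i) (Θi i)) :=
  lift_characterisation_general R Δ Θ
end

section
/- Let R₁, R₂ ⊆ S × S be binary relations on states. Then the lifting of the composition equals the composition of the liftings: lift(R₁ ∘ R₂) = lift(R₁) ∘ lift(R₂) as relations on distributions over S. -/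
open BigOperators

/-!
A pair `(Δ, Θ)` is in `liftRel R` exactly when it has a coupling `ω` supported on `R`.
The inclusion `lift(R₁ ∘ R₂) ⊆ lift R₁ ∘ lift R₂` is a direct induction on the lifting.
Conversely, given couplings `ω₁` of `(Δ, Γ)` on `R₁` and `ω₂` of
`(Γ, Θ)` on `R₂`, glue them along the common marginal `Γ`: put mass
`ω₁ (s, t) * ω₂ (t, u) / Γ t` on `(s, t, u)`. Its `(s, t)`- and `(t, u)`-marginals are `ω₁` and
`ω₂`, so forgetting `t` yields a coupling of `(Δ, Θ)` supported on `R₁ ∘ R₂`.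
-/

open Finsupp

namespace Finsupp

variable {α β : Type*}

theorem mapDomain_apply_eq_sum_filter {M : Type*} [DecidableEq β] [AddCommMonoid M]
    (f : α → β) (v : α →₀ M) (t : β) : v.mapDomain f t = ∑ a ∈ v.support with f a = t, v a := by
  simp [mapDomain, sum, single_apply, Finset.sum_ite]

theorem le_mapDomain_apply {f : α → β} {v : α →₀ ℝ} (hv : 0 ≤ v) (a : α) :
    v a ≤ v.mapDomain f (f a) := by
  classical
  by_cases ha : a ∈ v.support
  · rw [mapDomain_apply_eq_sum_filter]
    exact Finset.single_le_sum (fun a _ => hv a) (Finset.mem_filter.2 ⟨ha, rfl⟩)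
  · rw [notMem_support_iff.1 ha]
    exact mapDomain_nonneg hv _

theorem mapDomain_eq_sum_smul_single_one (f : α → β) (v : α →₀ ℝ) :
    v.mapDomain f = ∑ a ∈ v.support, v a • single (f a) 1 := by
  simp only [smul_single_one]
  rfl

end Finsupp

section IsDist

variable {S T : Type}

theorem isDist_point (s : S) : IsDist (point s) :=
  ⟨single_nonneg.2 zero_le_one, sum_single_index rfl⟩

theorem IsDist.finset_sum {ι : Type*} {I : Finset ι} {p : ι → ℝ} {Δ : ι → PDist S}
    (hp : ∀ i ∈ I, 0 ≤ p i) (hp1 : ∑ i ∈ I, p i = 1) (hΔ : ∀ i ∈ I, IsDist (Δ i)) :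
    IsDist (∑ i ∈ I, p i • Δ i) := by
  refine ⟨fun s => ?_, ?_⟩
  · rw [finsetSum_apply]
    exact Finset.sum_nonneg fun i hi => mul_nonneg (hp i hi) ((hΔ i hi).1 s)
  · calc (∑ i ∈ I, p i • Δ i).sum (fun _ x => x)
        = ∑ i ∈ I, p i * (Δ i).sum (fun _ x => x) := by
          rw [← sum_finsetSum_index (h := fun _ x => x) (fun _ => rfl) (fun _ _ _ => rfl)]
          exact Finset.sum_congr rfl fun i _ => by rw [sum_smul_index fun _ => rfl, mul_sum]
      _ = 1 := by rw [Finset.sum_congr rfl fun i hi => by rw [(hΔ i hi).2, mul_one], hp1]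

theorem sum_mapDomain_id (f : S → T) (v : PDist S) :
    ((v.mapDomain f).sum fun _ x => x) = v.sum fun _ x => x :=
  sum_mapDomain_index (fun _ => rfl) (fun _ _ _ => rfl)

theorem IsDist.mapDomain {Δ : PDist S} (h : IsDist Δ) (f : S → T) : IsDist (Δ.mapDomain f) :=
  ⟨mapDomain_nonneg h.1, by rw [sum_mapDomain_id, h.2]⟩

theorem IsDist.of_mapDomain {Δ : PDist S} {f : S → T} (hΔ : 0 ≤ Δ)
    (h : IsDist (Δ.mapDomain f)) : IsDist Δ :=
  ⟨hΔ, by rw [← sum_mapDomain_id f, h.2]⟩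

end IsDist

theorem Lift.finset_sum {S : Type} {ι : Type*} {R : S → PDist S → Prop} (I : Finset ι) (p : ι → ℝ)
    (Δ Θ : ι → PDist S) (hp : ∀ i ∈ I, 0 ≤ p i) (hp1 : ∑ i ∈ I, p i = 1)
    (h : ∀ i ∈ I, Lift R (Δ i) (Θ i)) :
    Lift R (∑ i ∈ I, p i • Δ i) (∑ i ∈ I, p i • Θ i) := by
  obtain ⟨i₀, -⟩ : I.Nonempty := Finset.nonempty_of_sum_ne_zero (f := p) (by simp [hp1])
  let e := I.equivFin
  let f : ℕ → ι := fun m => if hm : m < I.card then e.symm ⟨m, hm⟩ else i₀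
  have hf : ∀ m ∈ Finset.range I.card, f m ∈ I := fun m hm => by
    simp only [f, dif_pos (Finset.mem_range.1 hm), Finset.coe_mem]
  have reindex : ∀ {M : Type} [AddCommMonoid M] (g : ι → M),
      ∑ m ∈ Finset.range I.card, g (f m) = ∑ i ∈ I, g i := by
    intro M _ g
    rw [Finset.sum_range, ← I.sum_coe_sort, ← e.symm.sum_comp]
    simp [f]
  have := Lift.lin (Finset.range I.card) (fun m => p (f m)) (fun m => Δ (f m))
    (fun m => Θ (f m)) (fun m hm => hp _ (hf m hm)) (by rw [reindex p, hp1])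
    (fun m hm => h _ (hf m hm))
  rwa [reindex fun i => p i • Δ i, reindex fun i => p i • Θ i] at this

section Coupling

variable {S : Type} {R : S → S → Prop}

/-- `ω` is a coupling of `Δ` and `Θ` supported on `R`: the paper's witnesses
`Δ = ∑ pᵢ δ_{sᵢ}`, `Θ = ∑ pᵢ δ_{tᵢ}` with the weights collected on the pairs `(sᵢ, tᵢ)`. -/
structure IsCoupling (R : S → S → Prop) (ω : PDist (S × S)) (Δ Θ : PDist S) : Prop where
  isDist : IsDist ω
  rel : ∀ x ∈ ω.support, R x.1 x.2
  map_fst : ω.mapDomain Prod.fst = Δ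
  map_snd : ω.mapDomain Prod.snd = Θ

theorem isCoupling_point {s t : S} (h : R s t) : IsCoupling R (point (s, t)) (point s) (point t) :=
  ⟨isDist_point _, fun x hx => by rwa [Finset.mem_singleton.1 (support_single_subset hx)],
    mapDomain_single, mapDomain_single⟩

theorem IsCoupling.finset_sum {ι : Type*} {I : Finset ι} {p : ι → ℝ} {ω : ι → PDist (S × S)}
    {Δ Θ : ι → PDist S} (hp : ∀ i ∈ I, 0 ≤ p i) (hp1 : ∑ i ∈ I, p i = 1)
    (h : ∀ i ∈ I, IsCoupling R (ω i) (Δ i) (Θ i)) :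
    IsCoupling R (∑ i ∈ I, p i • ω i) (∑ i ∈ I, p i • Δ i) (∑ i ∈ I, p i • Θ i) := by
  classical
  refine ⟨.finset_sum hp hp1 fun i hi => (h i hi).isDist, fun x hx => ?_, ?_, ?_⟩
  · obtain ⟨i, hi, hx⟩ := Finset.mem_biUnion.1 (support_finsetSum hx)
    exact (h i hi).rel x (support_smul hx)
  · simp only [mapDomain_finsetSum, mapDomain_smul]
    exact Finset.sum_congr rfl fun i hi => by rw [(h i hi).map_fst]
  · simp only [mapDomain_finsetSum, mapDomain_smul]
    exact Finset.sum_congr rfl fun i hi => by rw [(h i hi).map_snd]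

theorem IsCoupling.liftRel {ω : PDist (S × S)} {Δ Θ : PDist S} (h : IsCoupling R ω Δ Θ) :
    liftRel R Δ Θ := by
  rw [← h.map_fst, ← h.map_snd, mapDomain_eq_sum_smul_single_one,
    mapDomain_eq_sum_smul_single_one]
  exact Lift.finset_sum _ _ _ _ (fun x _ => h.isDist.1 x) h.isDist.2
    fun x hx => .pt ⟨x.2, h.rel x hx, rfl⟩

theorem exists_isCoupling_of_liftRel {Δ Θ : PDist S} (h : liftRel R Δ Θ) :
    ∃ ω, IsCoupling R ω Δ Θ := by
  induction h with
  | pt h =>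
    obtain ⟨t, hst, rfl⟩ := h
    exact ⟨_, isCoupling_point hst⟩
  | lin I p Δ Θ hp hp1 _ ih =>
    choose! ω hω using ih
    exact ⟨_, .finset_sum hp hp1 hω⟩

theorem liftRel_iff_exists_isCoupling {Δ Θ : PDist S} :
    liftRel R Δ Θ ↔ ∃ ω, IsCoupling R ω Δ Θ :=
  ⟨exists_isCoupling_of_liftRel, fun ⟨_, h⟩ => h.liftRel⟩

end Coupling

section Glue

variable {α β T : Type*} (γ : T →₀ ℝ) (f : α → T) (g : β → T) (μ : α →₀ ℝ) (ν : β →₀ ℝ)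

open Classical in
/-- `μ` and `ν` made conditionally independent given their common image `t = f a = g b`,
whose law is `γ`. -/
noncomputable def glue : α × β →₀ ℝ :=
  ∑ a ∈ μ.support, ∑ b ∈ ν.support,
    single (a, b) (if f a = g b then μ a * ν b / γ (f a) else 0)

theorem glue_nonneg (hγ : 0 ≤ γ) (hμ : 0 ≤ μ) (hν : 0 ≤ ν) : 0 ≤ glue γ f g μ ν := by
  refine Finset.sum_nonneg fun a _ => Finset.sum_nonneg fun b _ => single_nonneg.2 ?_
  split_ifs
  exacts [div_nonneg (mul_nonneg (hμ a) (hν b)) (hγ _), le_rfl]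

theorem mem_support_glue {x : α × β} (hx : x ∈ (glue γ f g μ ν).support) :
    x.1 ∈ μ.support ∧ x.2 ∈ ν.support ∧ f x.1 = g x.2 := by
  classical
  obtain ⟨a, ha, hx⟩ := Finset.mem_biUnion.1 (support_finsetSum hx)
  obtain ⟨b, hb, hx⟩ := Finset.mem_biUnion.1 (support_finsetSum hx)
  obtain ⟨rfl, hw⟩ := (mem_support_single _ _ _).1 hx
  exact ⟨ha, hb, by_contra fun hab => hw (if_neg hab)⟩

theorem mapDomain_swap_glue : (glue γ f g μ ν).mapDomain Prod.swap = glue γ g f ν μ := by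
  simp only [glue, mapDomain_finsetSum, mapDomain_single, Prod.swap_prod_mk]
  rw [Finset.sum_comm]
  refine Finset.sum_congr rfl fun b _ => Finset.sum_congr rfl fun a _ => ?_
  by_cases h : f a = g b
  · rw [if_pos h, if_pos h.symm, h, mul_comm]
  · rw [if_neg h, if_neg (Ne.symm h)]

variable {γ f g μ ν}

theorem mapDomain_fst_glue (hμ : 0 ≤ μ) (hμγ : μ.mapDomain f = γ) (hνγ : ν.mapDomain g = γ) :
    (glue γ f g μ ν).mapDomain Prod.fst = μ := by
  classical
  have row_sum : ∀ a ∈ μ.support,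
      ∑ b ∈ ν.support, (if f a = g b then μ a * ν b / γ (f a) else 0) = μ a := by
    intro a ha
    have hγ : 0 < γ (f a) := hμγ ▸
      (lt_of_le_of_ne (hμ a) (mem_support_iff.1 ha).symm).trans_le (le_mapDomain_apply hμ a)
    calc ∑ b ∈ ν.support, (if f a = g b then μ a * ν b / γ (f a) else 0)
        = μ a / γ (f a) * ν.mapDomain g (f a) := by
          rw [mapDomain_apply_eq_sum_filter, Finset.sum_filter, Finset.mul_sum]
          refine Finset.sum_congr rfl fun b _ => ?_
          simp only [eq_comm (a := g b)]
          split_ifs <;> ring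
      _ = μ a := by rw [hνγ, div_mul_cancel₀ _ hγ.ne']
  calc (glue γ f g μ ν).mapDomain Prod.fst
      = ∑ a ∈ μ.support, single a
          (∑ b ∈ ν.support, if f a = g b then μ a * ν b / γ (f a) else 0) := by
        simp only [glue, mapDomain_finsetSum, mapDomain_single, single_finsetSum]
    _ = μ := (Finset.sum_congr rfl fun a ha => by rw [row_sum a ha]).trans μ.sum_single

theorem mapDomain_snd_glue (hν : 0 ≤ ν) (hμγ : μ.mapDomain f = γ) (hνγ : ν.mapDomain g = γ) :
    (glue γ f g μ ν).mapDomain Prod.snd = ν := by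
  have : (Prod.snd : α × β → β) = Prod.fst ∘ Prod.swap := rfl
  rw [this, mapDomain_comp, mapDomain_swap_glue, mapDomain_fst_glue hν hνγ hμγ]

end Glue

section Comp

variable {S : Type} {R₁ R₂ : S → S → Prop}

theorem IsCoupling.comp {ω₁ ω₂ : PDist (S × S)} {Δ Γ Θ : PDist S}
    (h₁ : IsCoupling R₁ ω₁ Δ Γ) (h₂ : IsCoupling R₂ ω₂ Γ Θ) :
    IsCoupling (Relation.Comp R₁ R₂)
      ((glue Γ Prod.snd Prod.fst ω₁ ω₂).mapDomain fun z => (z.1.1, z.2.2)) Δ Θ := by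
  classical
  set π := glue Γ Prod.snd Prod.fst ω₁ ω₂
  have hπ₁ : π.mapDomain Prod.fst = ω₁ := mapDomain_fst_glue h₁.isDist.1 h₁.map_snd h₂.map_fst
  have hπ₂ : π.mapDomain Prod.snd = ω₂ := mapDomain_snd_glue h₂.isDist.1 h₁.map_snd h₂.map_fst
  have hπ : IsDist π := .of_mapDomain
    (glue_nonneg _ _ _ _ _ (h₁.map_snd ▸ mapDomain_nonneg h₁.isDist.1) h₁.isDist.1 h₂.isDist.1)
    (hπ₁ ▸ h₁.isDist)
  refine ⟨hπ.mapDomain _, fun x hx => ?_, ?_, ?_⟩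
  · obtain ⟨z, hz, rfl⟩ := Finset.mem_image.1 (mapDomain_support hx)
    obtain ⟨hz₁, hz₂, hz⟩ := mem_support_glue _ _ _ _ _ hz
    exact ⟨z.1.2, h₁.rel _ hz₁, hz ▸ h₂.rel _ hz₂⟩
  · rw [← mapDomain_comp]
    exact (mapDomain_comp (f := Prod.fst) (g := Prod.fst)).trans (by rw [hπ₁, h₁.map_fst])
  · rw [← mapDomain_comp]
    exact (mapDomain_comp (f := Prod.snd) (g := Prod.snd)).trans (by rw [hπ₂, h₂.map_snd])

theorem comp_liftRel_of_liftRel_comp {Δ Θ : PDist S}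
    (h : liftRel (Relation.Comp R₁ R₂) Δ Θ) : Relation.Comp (liftRel R₁) (liftRel R₂) Δ Θ := by
  induction h with
  | pt h =>
    obtain ⟨u, ⟨t, h₁, h₂⟩, rfl⟩ := h
    exact ⟨point t, .pt ⟨t, h₁, rfl⟩, .pt ⟨u, h₂, rfl⟩⟩
  | lin I p Δ Θ hp hp1 _ ih =>
    choose! Γ hΔΓ hΓΘ using ih
    exact ⟨∑ i ∈ I, p i • Γ i, .lin I p Δ Γ hp hp1 hΔΓ, .lin I p Γ Θ hp hp1 hΓΘ⟩

end Comp

/-- The lifting of the composition of two state relations coincides with the composition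
of their liftings. -/
theorem lift_comp {S : Type} (R₁ R₂ : S → S → Prop) (Δ Θ : PDist S) :
    liftRel (Relation.Comp R₁ R₂) Δ Θ ↔ Relation.Comp (liftRel R₁) (liftRel R₂) Δ Θ := by
  refine ⟨comp_liftRel_of_liftRel_comp, fun ⟨Γ, h₁, h₂⟩ => ?_⟩
  obtain ⟨ω₁, hω₁⟩ := liftRel_iff_exists_isCoupling.1 h₁
  obtain ⟨ω₂, hω₂⟩ := liftRel_iff_exists_isCoupling.1 h₂
  exact liftRel_iff_exists_isCoupling.2 ⟨_, hω₁.comp hω₂⟩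
end

section
/- Let R ⊆ S × S be a relation on states. Then Δ lift(R) Θ if and only if there exists a finite index set I, probabilities p_i summing to 1, and states s_i, t_i such that Δ = Σ_{i∈I} p_i·δ_{s_i}, Θ = Σ_{i∈I} p_i·δ_{t_i}, and s_i R t_i for each i ∈ I. -/
open BigOperators

/-!
The pairs `(Δ, Θ)` that split as matching convex combinations of point pairs `(δ_s, δ_t)` with
`s R t` contain the point pairs and are closed under convex combinations: a combination
`∑ᵢ pᵢ • ∑ⱼ qᵢⱼ • δ_{sᵢⱼ}` flattens to a single one with weights `pᵢ qᵢⱼ`, reindexed into `ℕ`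
by `Nat.pair i j`. Hence they contain the lifting; conversely each such pair is a single
convex combination of point pairs, which are lifted by the point rule.
-/

theorem Finset.sum_image_pair_sigma {M : Type*} [AddCommMonoid M] (I : Finset ℕ)
    (J : ℕ → Finset ℕ) (f : ℕ → M) :
    ∑ k ∈ (I.sigma J).image (fun x => Nat.pair x.1 x.2), f k =
      ∑ i ∈ I, ∑ j ∈ J i, f (Nat.pair i j) := by
  rw [Finset.sum_image, Finset.sum_sigma]
  intro x _ y _ hxy
  obtain ⟨h₁, h₂⟩ := Nat.pair_eq_pair.mp hxy
  exact Sigma.ext h₁ (heq_of_eq h₂)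

theorem Finset.mem_image_pair_sigma {I : Finset ℕ} {J : ℕ → Finset ℕ} {k : ℕ}
    (hk : k ∈ (I.sigma J).image (fun x => Nat.pair x.1 x.2)) :
    k.unpair.1 ∈ I ∧ k.unpair.2 ∈ J k.unpair.1 := by
  obtain ⟨⟨i, j⟩, hij, rfl⟩ := Finset.mem_image.mp hk
  simpa using hij

section PointDecomposition

variable {S : Type} {R : S → S → Prop}

def PointDecomposition (R : S → S → Prop) (Δ Θ : PDist S) : Prop :=
  ∃ (I : Finset ℕ) (p : ℕ → ℝ) (s t : ℕ → S),
    (∀ i ∈ I, 0 ≤ p i) ∧ (∑ i ∈ I, p i) = 1 ∧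
    Δ = (∑ i ∈ I, p i • point (s i)) ∧
    Θ = (∑ i ∈ I, p i • point (t i)) ∧
    (∀ i ∈ I, R (s i) (t i))

theorem PointDecomposition.point {s t : S} (h : R s t) :
    PointDecomposition R (point s) (point t) :=
  ⟨{0}, fun _ => 1, fun _ => s, fun _ => t, by simp, by simp, by simp, by simp, fun _ _ => h⟩

theorem liftRel_of_pointDecomposition {Δ Θ : PDist S} (h : PointDecomposition R Δ Θ) :
    liftRel R Δ Θ := by
  obtain ⟨I, p, s, t, hp, hp1, rfl, rfl, hR⟩ := h
  exact Lift.lin I p _ _ hp hp1 fun i hi => Lift.pt ⟨t i, hR i hi, rfl⟩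

theorem PointDecomposition.sum_smul {I : Finset ℕ} {p : ℕ → ℝ} {Δ Θ : ℕ → PDist S}
    (hp : ∀ i ∈ I, 0 ≤ p i) (hp1 : ∑ i ∈ I, p i = 1)
    (h : ∀ i ∈ I, PointDecomposition R (Δ i) (Θ i)) :
    PointDecomposition R (∑ i ∈ I, p i • Δ i) (∑ i ∈ I, p i • Θ i) := by
  -- `choose!` needs a default state for the indices outside `I`.
  have : Nonempty S := by
    obtain ⟨i, hi⟩ := Finset.nonempty_of_sum_ne_zero (hp1 ▸ one_ne_zero)
    obtain ⟨-, -, s, -⟩ := h i hi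
    exact ⟨s 0⟩
  choose! J q s t hq hq1 hΔ hΘ hR using h
  refine ⟨(I.sigma J).image (fun x => Nat.pair x.1 x.2),
    fun k => p k.unpair.1 * q k.unpair.1 k.unpair.2, fun k => s k.unpair.1 k.unpair.2,
    fun k => t k.unpair.1 k.unpair.2, ?_, ?_, ?_, ?_, ?_⟩
  · intro k hk
    obtain ⟨hi, hj⟩ := Finset.mem_image_pair_sigma hk
    exact mul_nonneg (hp _ hi) (hq _ hi _ hj)
  · simp only [Finset.sum_image_pair_sigma, Nat.unpair_pair, ← Finset.mul_sum]
    rw [← hp1]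
    exact Finset.sum_congr rfl fun i hi => by rw [hq1 i hi, mul_one]
  · simp only [Finset.sum_image_pair_sigma, Nat.unpair_pair, mul_smul, ← Finset.smul_sum]
    exact Finset.sum_congr rfl fun i hi => by rw [hΔ i hi]
  · simp only [Finset.sum_image_pair_sigma, Nat.unpair_pair, mul_smul, ← Finset.smul_sum]
    exact Finset.sum_congr rfl fun i hi => by rw [hΘ i hi]
  · intro k hk
    obtain ⟨hi, hj⟩ := Finset.mem_image_pair_sigma hk
    exact hR _ hi _ hj

theorem PointDecomposition.of_liftRel {Δ Θ : PDist S} (h : liftRel R Δ Θ) :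
    PointDecomposition R Δ Θ := by
  induction h with
  | pt hR =>
    obtain ⟨t, hRt, rfl⟩ := hR
    exact .point hRt
  | lin I p _ _ hp hp1 _ ih => exact .sum_smul hp hp1 ih

end PointDecomposition

/-- Characterisation of the lifting of a state relation: `Δ lift(R) Θ` iff both sides
decompose as matching convex combinations of point distributions with `s_i R t_i`. -/
theorem liftRel_characterisation {S : Type} (R : S → S → Prop) (Δ Θ : PDist S) :
    liftRel R Δ Θ ↔
      ∃ (I : Finset ℕ) (p : ℕ → ℝ) (s t : ℕ → S),
        (∀ i ∈ I, 0 ≤ p i) ∧ (∑ i ∈ I, p i) = 1 ∧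
        Δ = (∑ i ∈ I, p i • point (s i)) ∧
        Θ = (∑ i ∈ I, p i • point (t i)) ∧
        (∀ i ∈ I, R (s i) (t i)) :=
  ⟨PointDecomposition.of_liftRel, liftRel_of_pointDecomposition⟩
end

section
/- If relations R₁, R₂ ⊆ D(S) × D(S) on distributions are both linear (closed under finite convex combinations) and left-decomposable, then their relational composition R₁ ∘ R₂ is also linear and left-decomposable. -/
open BigOperators

/-- A relation on distributions is linear if it is closed under finite convex combinations. -/
def Linear {S : Type} (R : PDist S → PDist S → Prop) : Prop :=
  ∀ (I : Finset ℕ) (p : ℕ → ℝ) (Δ Θ : ℕ → PDist S),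
    (∀ i ∈ I, 0 ≤ p i) → (∑ i ∈ I, p i) = 1 →
    (∀ i ∈ I, R (Δ i) (Θ i)) →
    R (∑ i ∈ I, p i • Δ i) (∑ i ∈ I, p i • Θ i)

/-- A relation on distributions is left-decomposable if any convex decomposition of the
left-hand side induces a matching decomposition of the right-hand side. -/
def LeftDecomp {S : Type} (R : PDist S → PDist S → Prop) : Prop :=
  ∀ (I : Finset ℕ) (p : ℕ → ℝ) (Δ : ℕ → PDist S) (Θ : PDist S),
    (∀ i ∈ I, 0 ≤ p i) → (∑ i ∈ I, p i) = 1 →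
    R (∑ i ∈ I, p i • Δ i) Θ →
    ∃ Θi : ℕ → PDist S, Θ = (∑ i ∈ I, p i • Θi i) ∧ ∀ i ∈ I, R (Δ i) (Θi i)

section Comp

variable {S : Type} {R₁ R₂ : PDist S → PDist S → Prop}

namespace Linear

theorem comp (h₁ : Linear R₁) (h₂ : Linear R₂) : Linear (Relation.Comp R₁ R₂) := by
  intro I p Δ Θ hp hsum hR
  choose! Λ hΔΛ hΛΘ using hR
  exact ⟨∑ i ∈ I, p i • Λ i, h₁ I p Δ Λ hp hsum hΔΛ, h₂ I p Λ Θ hp hsum hΛΘ⟩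

end Linear

namespace LeftDecomp

theorem comp (h₁ : LeftDecomp R₁) (h₂ : LeftDecomp R₂) : LeftDecomp (Relation.Comp R₁ R₂) := by
  rintro I p Δ Θ hp hsum ⟨Λ, hΔΛ, hΛΘ⟩
  obtain ⟨Λi, rfl, hΔΛi⟩ := h₁ I p Δ Λ hp hsum hΔΛ
  obtain ⟨Θi, rfl, hΛΘi⟩ := h₂ I p Λi Θ hp hsum hΛΘ
  exact ⟨Θi, rfl, fun i hi => ⟨Λi i, hΔΛi i hi, hΛΘi i hi⟩⟩

end LeftDecomp

end Comp

/-- Linearity and left-decomposability are preserved by relational composition. -/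
theorem comp_linear_leftDecomp {S : Type} (R₁ R₂ : PDist S → PDist S → Prop)
    (h₁l : Linear R₁) (h₁d : LeftDecomp R₁) (h₂l : Linear R₂) (h₂d : LeftDecomp R₂) :
    Linear (Relation.Comp R₁ R₂) ∧ LeftDecomp (Relation.Comp R₁ R₂) :=
  ⟨h₁l.comp h₂l, h₁d.comp h₂d⟩
end

section
/- In a pLTS, if ≈ is the largest weak (open) bisimulation between configurations, Δ lift(≈) Θ, and Δ →^α Δ' (lifted transition), then there exists Θ' with Θ ⟹^α̂ Θ' and Δ' lift(≈) Θ'. (Transfer property of bisimilarity to lifted distributions.) -/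
open BigOperators

/-- A probabilistic labelled transition system; `none` is the internal action τ. -/
structure PLTS (S Act : Type) where
  trans : S → Option Act → PDist S → Prop

/-- The "hatted" relation: `s →^τ̂ Δ` iff `s →^τ Δ` or `Δ = δ_s`;
for visible actions it coincides with the transition relation. -/
def hatT {S Act : Type} (L : PLTS S Act) (α : Option Act) (s : S) (Δ : PDist S) : Prop :=
  L.trans s α Δ ∨ (α = none ∧ Δ = point s)

/-- The reflexive-transitive closure of the lifted τ̂-relation on distributions. -/
def weakTau {S Act : Type} (L : PLTS S Act) : PDist S → PDist S → Prop :=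
  Relation.ReflTransGen (Lift (hatT L none))

/-- The lifted strong transition relation on distributions for a fixed label. -/
def strongL {S Act : Type} (L : PLTS S Act) (α : Option Act) : PDist S → PDist S → Prop :=
  Lift (fun s Δ => L.trans s α Δ)

/-- Weak transitions: `⟹^τ̂` for τ, and `⟹^τ̂ · →^a · ⟹^τ̂` for visible actions. -/
def weak {S Act : Type} (L : PLTS S Act) : Option Act → PDist S → PDist S → Prop
  | none => weakTau L
  | some a => fun Δ Θ =>
      ∃ Δ₁ Δ₂, weakTau L Δ Δ₁ ∧ strongL L (some a) Δ₁ Δ₂ ∧ weakTau L Δ₂ Θ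

/-- `R` is a weak bisimulation: strong transitions on either side are matched by
weak transitions of the other, modulo the lifting of `R`. -/
def IsWeakBisim {S Act : Type} (L : PLTS S Act) (R : S → S → Prop) : Prop :=
  ∀ s t, R s t →
    (∀ α Δ, L.trans s α Δ → ∃ Θ, weak L α (point t) Θ ∧ liftRel R Δ Θ) ∧
    (∀ α Δ, L.trans t α Δ → ∃ Θ, weak L α (point s) Θ ∧ liftRel R Θ Δ)

/-- Weak bisimilarity: the largest weak bisimulation (union of all of them). -/
def Bisim {S Act : Type} (L : PLTS S Act) (s t : S) : Prop :=
  ∃ R, IsWeakBisim L R ∧ R s t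

/-!
Lifting is pointwise: `Δ lift(R) Θ` means `Θ = ∑ₓ Δ x • Θₓ` with every `Θₓ` a convex combination
of `R`-successors of `x`. Decomposing both `Δ lift(≈) Θ` and `Δ →^α Δ'` this way, over the same
weights `Δ x`, reduces the theorem to a single state `x`. There, a pair `(δ_t, D)` with `x ≈ t`
and `x →^α D` is matched by the bisimulation game, and the pairs `(Θ, Δ')` admitting some `Θ'`
with `Θ ⟹^α̂ Θ'` and `Δ' lift(≈) Θ'` form a convex set, so matching passes to convex hulls and
then to the `Δ`-weighted sums. Convexity of `⟹^α̂` comes from running two τ̂-chains in parallel,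
the one that finishes first idling at its target; this needs the targets to be τ̂-reflexive,
which genuine distributions are but arbitrary transition targets need not be.
-/

theorem Finset.sum_smul_centerMass {ι R E : Type*} [Field R] [LinearOrder R]
    [IsStrictOrderedRing R] [AddCommGroup E] [Module R E] {t : Finset ι} {w : ι → R}
    (hw : ∀ i ∈ t, 0 ≤ w i) (z : ι → E) :
    (∑ i ∈ t, w i) • t.centerMass w z = ∑ i ∈ t, w i • z i := by
  by_cases h : ∑ i ∈ t, w i = 0
  · rw [h, zero_smul, eq_comm]
    exact Finset.sum_eq_zero fun i hi => by
      rw [(Finset.sum_eq_zero_iff_of_nonneg hw).1 h i hi, zero_smul]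
  · rw [Finset.centerMass, smul_inv_smul₀ h]

theorem Convex.sum_mem_prod {ι E F : Type*} [AddCommGroup E] [Module ℝ E] [AddCommGroup F]
    [Module ℝ F] {s : Set (E × F)} (hs : Convex ℝ s) {t : Finset ι} {w : ι → ℝ} {f : ι → E}
    {g : ι → F} (h₀ : ∀ i ∈ t, 0 ≤ w i) (h₁ : ∑ i ∈ t, w i = 1) (hz : ∀ i ∈ t, (f i, g i) ∈ s) :
    (∑ i ∈ t, w i • f i, ∑ i ∈ t, w i • g i) ∈ s := by
  simpa only [Prod.smul_mk, prod_mk_sum] using hs.sum_mem h₀ h₁ hz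

namespace Lift

variable {S : Type} {R R' : S → PDist S → Prop} {Δ Θ Δ₁ Θ₁ Δ₂ Θ₂ : PDist S}

theorem mono (hRR' : ∀ s Θ, R s Θ → R' s Θ) (h : Lift R Δ Θ) : Lift R' Δ Θ := by
  induction h with
  | pt hR => exact pt (hRR' _ _ hR)
  | lin I p Δ Θ hp hp1 _ ih => exact lin I p Δ Θ hp hp1 ih

theorem smul_add (h₁ : Lift R Δ₁ Θ₁) (h₂ : Lift R Δ₂ Θ₂) {a b : ℝ} (ha : 0 ≤ a) (hb : 0 ≤ b)
    (hab : a + b = 1) : Lift R (a • Δ₁ + b • Δ₂) (a • Θ₁ + b • Θ₂) := by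
  have := lin (R := R) {0, 1} (fun i => if i = 0 then a else b)
    (fun i => if i = 0 then Δ₁ else Δ₂) (fun i => if i = 0 then Θ₁ else Θ₂) (by simp [ha, hb])
    (by simp [hab]) (by simp [h₁, h₂])
  simpa using this

theorem refl_left (hR' : ∀ s, R' s (point s)) (h : Lift R Δ Θ) : Lift R' Δ Δ := by
  induction h with
  | pt => exact pt (hR' _)
  | lin I p Δ _ hp hp1 _ ih => exact lin I p Δ Δ hp hp1 ih

theorem refl_right (hR : ∀ s Θ, R s Θ → Lift R' Θ Θ) (h : Lift R Δ Θ) : Lift R' Θ Θ := by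
  induction h with
  | pt hR' => exact hR _ _ hR'
  | lin I p _ Θ hp hp1 _ ih => exact lin I p Θ Θ hp hp1 ih

theorem isDist_left (h : Lift R Δ Θ) : IsDist Δ := by
  induction h with
  | pt =>
    classical
    refine ⟨fun x => ?_, by simp [point]⟩
    rw [point, Finsupp.single_apply]
    split_ifs <;> norm_num
  | lin I p Δ Θ hp hp1 _ ih =>
    refine ⟨fun x => ?_, ?_⟩
    · rw [Finsupp.finsetSum_apply]
      exact Finset.sum_nonneg fun i hi => mul_nonneg (hp i hi) ((ih i hi).1 x)
    · rw [← Finsupp.sum_finsetSum_index (fun _ => rfl) (fun _ _ _ => rfl), ← hp1]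
      refine Finset.sum_congr rfl fun i hi => ?_
      rw [Finsupp.sum_smul_index (fun _ => rfl), ← Finsupp.mul_sum, (ih i hi).2, mul_one]

theorem exists_eq_linearCombination (h : Lift R Δ Θ) :
    ∃ Θx : S → PDist S, (∀ x ∈ Δ.support, Θx x ∈ convexHull ℝ {Θ' | R x Θ'}) ∧
      Θ = Finsupp.linearCombination ℝ Θx Δ := by
  classical
  induction h with
  | @pt s Θ hR =>
    refine ⟨fun _ => Θ, fun x hx => ?_, by simp [point]⟩
    rw [point, Finsupp.support_single _ one_ne_zero, Finset.mem_singleton] at hx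
    exact subset_convexHull ℝ _ (hx ▸ hR)
  | lin I p Δ Θ hp _ hlift ih =>
    choose! Θx hmem hΘ using ih
    have hw : ∀ x, ∀ i ∈ I, 0 ≤ p i * Δ i x := fun x i hi =>
      mul_nonneg (hp i hi) ((hlift i hi).isDist_left.1 x)
    have hΔ : ∀ x, (∑ i ∈ I, p i • Δ i) x = ∑ i ∈ I, p i * Δ i x := fun x => by
      simp [Finsupp.finsetSum_apply]
    refine ⟨fun x => I.centerMass (fun i => p i * Δ i x) (fun i => Θx i x), fun x hx => ?_, ?_⟩
    · beta_reduce
      rw [← Finset.centerMass_filter_ne_zero]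
      refine (convex_convexHull ℝ _).centerMass_mem
        (fun i hi => hw x i (Finset.mem_filter.1 hi).1) ?_ fun i hi => ?_
      · rw [Finset.sum_filter_ne_zero]
        exact lt_of_le_of_ne (Finset.sum_nonneg (hw x)) (hΔ x ▸ Finsupp.mem_support_iff.1 hx).symm
      · obtain ⟨hi, hne⟩ := Finset.mem_filter.1 hi
        exact hmem i hi x (Finsupp.mem_support_iff.2 (right_ne_zero_of_mul hne))
    · set U := I.biUnion fun i => (Δ i).support
      have hsupp : ∀ D : PDist S, D.support ⊆ U → ∀ v : S → PDist S,
          Finsupp.linearCombination ℝ v D = ∑ x ∈ U, D x • v x := fun D hD v =>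
        Finsupp.linearCombination_apply_of_mem_supported ℝ ((Finsupp.mem_supported ℝ D).2 hD)
      rw [hsupp _ (Finsupp.support_finsetSum.trans
        (Finset.biUnion_mono fun i _ => Finsupp.support_smul))]
      simp_rw [hΔ, Finset.sum_smul_centerMass (hw _)]
      rw [Finset.sum_comm]
      refine Finset.sum_congr rfl fun i hi => ?_
      rw [hΘ i hi, hsupp _ (Finset.subset_biUnion_of_mem (fun i => (Δ i).support) hi),
        Finset.smul_sum]
      simp_rw [smul_smul]

end Lift

section Weak

variable {S Act : Type} (L : PLTS S Act)

theorem hatT_none_point (s : S) : hatT L none s (point s) :=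
  Or.inr ⟨rfl, rfl⟩

variable {L}

theorem liftRel.refl_right {R : S → S → Prop} {Δ Θ : PDist S} (h : liftRel R Δ Θ) :
    Lift (hatT L none) Θ Θ :=
  Lift.refl_right (fun _ _ ⟨t, _, hΘ⟩ => hΘ ▸ Lift.pt (hatT_none_point L t)) h

theorem strongL.refl_left {α : Option Act} {Δ Δ' : PDist S} (h : strongL L α Δ Δ') :
    Lift (hatT L none) Δ Δ :=
  Lift.refl_left (hatT_none_point L) h

theorem weakTau.smul_add {A C A' C' : PDist S} (h : weakTau L A C) (hC : Lift (hatT L none) C C)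
    (h' : weakTau L A' C') (hC' : Lift (hatT L none) C' C') {a b : ℝ} (ha : 0 ≤ a) (hb : 0 ≤ b)
    (hab : a + b = 1) : weakTau L (a • A + b • A') (a • C + b • C') := by
  induction h using Relation.ReflTransGen.head_induction_on generalizing A' with
  | refl =>
    induction h' using Relation.ReflTransGen.head_induction_on with
    | refl => exact .refl
    | head hstep _ ih => exact .head (hC.smul_add hstep ha hb hab) ih
  | head hstep _ ih =>
    rcases h'.cases_head with rfl | ⟨A₁', hstep', h'⟩
    · exact .head (hstep.smul_add hC' ha hb hab) (ih .refl)
    · exact .head (hstep.smul_add hstep' ha hb hab) (ih h')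

theorem convex_weak (α : Option Act) :
    Convex ℝ {q : PDist S × PDist S | weak L α q.1 q.2 ∧ Lift (hatT L none) q.2 q.2} := by
  rintro ⟨A, C⟩ ⟨hw, hC⟩ ⟨A', C'⟩ ⟨hw', hC'⟩ a b ha hb hab
  refine ⟨?_, hC.smul_add hC' ha hb hab⟩
  cases α with
  | none => exact hw.smul_add hC hw' hC' ha hb hab
  | some =>
    obtain ⟨D₁, D₂, hτ₁, hstep, hτ₂⟩ := hw
    obtain ⟨D₁', D₂', hτ₁', hstep', hτ₂'⟩ := hw'
    exact ⟨_, _, hτ₁.smul_add hstep.refl_left hτ₁' hstep'.refl_left ha hb hab,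
      hstep.smul_add hstep' ha hb hab, hτ₂.smul_add hC hτ₂' hC' ha hb hab⟩

end Weak

section Transfer

variable {S Act : Type} {L : PLTS S Act} {α : Option Act}

variable (L α) in
def weakMatch : Set (PDist S × PDist S) :=
  {q | ∃ Θ', weak L α q.1 Θ' ∧ liftRel (Bisim L) q.2 Θ'}

theorem convex_weakMatch : Convex ℝ (weakMatch L α) := by
  rintro ⟨Θ₁, Δ₁⟩ ⟨C₁, hw₁, hl₁⟩ ⟨Θ₂, Δ₂⟩ ⟨C₂, hw₂, hl₂⟩ a b ha hb hab
  have hw : (a • (Θ₁, C₁) + b • (Θ₂, C₂)) ∈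
      {q : PDist S × PDist S | weak L α q.1 q.2 ∧ Lift (hatT L none) q.2 q.2} :=
    convex_weak α ⟨hw₁, hl₁.refl_right⟩ ⟨hw₂, hl₂.refl_right⟩ ha hb hab
  exact ⟨a • C₁ + b • C₂, hw.1, Lift.smul_add hl₁ hl₂ ha hb hab⟩

theorem point_mem_weakMatch {s t : S} {D : PDist S} (hst : Bisim L s t) (hD : L.trans s α D) :
    (point t, D) ∈ weakMatch L α := by
  obtain ⟨R, hR, hst⟩ := hst
  obtain ⟨W, hW, hDW⟩ := (hR s t hst).1 α D hD
  exact ⟨W, hW, Lift.mono (fun _ _ ⟨t', hRt', hΘ⟩ => ⟨t', ⟨R, hR, hRt'⟩, hΘ⟩) hDW⟩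

theorem mem_weakMatch_of_mem_convexHull {x : S} {Θ Δ' : PDist S}
    (hΘ : Θ ∈ convexHull ℝ {Θ' | ∃ t, Bisim L x t ∧ Θ' = point t})
    (hΔ' : Δ' ∈ convexHull ℝ {D | L.trans x α D}) : (Θ, Δ') ∈ weakMatch L α := by
  have hmem : (Θ, Δ') ∈ convexHull ℝ
      ({Θ' | ∃ t, Bisim L x t ∧ Θ' = point t} ×ˢ {D | L.trans x α D}) := by
    rw [convexHull_prod]
    exact ⟨hΘ, hΔ'⟩
  refine convexHull_min ?_ convex_weakMatch hmem
  rintro ⟨_, D⟩ ⟨⟨t, hxt, rfl⟩, hD⟩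
  exact point_mem_weakMatch hxt hD

end Transfer

/-- Transfer property: a lifted strong transition from `Δ` is matched by a weak
transition from any `Θ` with `Δ lift(≈) Θ`, up to `lift(≈)`. -/
theorem bisim_transfer {S Act : Type} (L : PLTS S Act) (α : Option Act)
    (Δ Θ Δ' : PDist S) (h : liftRel (Bisim L) Δ Θ) (hstep : strongL L α Δ Δ') :
    ∃ Θ', weak L α Θ Θ' ∧ liftRel (Bisim L) Δ' Θ' := by
  obtain ⟨hΔ_nonneg, hΔ_mass⟩ := Lift.isDist_left h
  obtain ⟨Θx, hΘx, rfl⟩ := Lift.exists_eq_linearCombination h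
  obtain ⟨Δx, hΔx, rfl⟩ := Lift.exists_eq_linearCombination hstep
  exact convex_weakMatch.sum_mem_prod (fun x _ => hΔ_nonneg x) hΔ_mass
    fun x hx => mem_weakMatch_of_mem_convexHull (hΘx x hx) (hΔx x hx)
end
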